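/- arXiv:2304.00304 — 2 statements merged into one kernel-verified Lean document; each statement's English description precedes it below -/
import Mathlib

section
/- Let m, n ≥ r ≥ 1 and let B, B̃ = B + F ∈ ℝ^{m×n} both have rank r. Let B = UΣVᵀ and B̃ = ŨΣ̃Ṽᵀ be full singular value decompositions: U ∈ 𝕆^{m×m}, V ∈ 𝕆^{n×n} orthogonal, Σ ∈ ℝ^{m×n} with diagonal entries σ_1 ≥ … ≥ σ_r > 0 and all other entries zero, and analogously for Ũ, Σ̃, Ṽ with σ̃_1 ≥ … ≥ σ̃_r > 0. Write U₁ = U_{(:,1:r)}, U₂ = U_{(:,r+1:m)}, Ũ₁ = Ũ_{(:,1:r)}, V₁ = V_{(:,1:r)}, V₂ = V_{(:,r+1:n)}, Ṽ₁ = Ṽ_{(:,1:r)}. Then max{ ‖U₂ᵀŨ₁‖₂, ‖V₂ᵀṼ₁‖₂ } ≤ ‖F‖₂ / max{σ_r, σ̃_r}. (The left-hand side is max{‖sin Θ(𝒰,𝒰̃)‖₂, ‖sin Θ(𝒱,𝒱̃)‖₂} for the corresponding singular subspaces.) -/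
/-! Write `W₁₁, W₁₂, W₂₁` for the blocks of an orthogonal matrix `W` split after the first `r`
indices. Since `U₂ᵀ B = 0` and `B̃ Ṽ₁ = Ũ₁ Σ̃₁`, sandwiching `F = B̃ - B` gives
`U₂ᵀ F Ṽ₁ = U₂ᵀ Ũ₁ Σ̃₁`, hence `‖U₂ᵀ Ũ₁‖ ≤ ‖F‖ / σ̃_r`. Exchanging the roles of `B` and `B̃` gives
`‖Ũ₂ᵀ U₁‖ ≤ ‖F‖ / σ_r`, and the two sines agree: for `W = Uᵀ Ũ` they are `‖W₂₁‖` and `‖W₁₂‖`, and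
the identities `W₁₁ᵀ W₁₁ + W₂₁ᵀ W₂₁ = 1 = W₁₁ W₁₁ᵀ + W₁₂ W₁₂ᵀ` reduce `‖W₂₁‖ ≤ ‖W₁₂‖` to the fact
that the square matrices `W₁₁` and `W₁₁ᵀ` have the same smallest singular value. Transposing
everything handles the right singular subspaces. -/

open Matrix

noncomputable def specNorm {m n : ℕ} (A : Matrix (Fin m) (Fin n) ℝ) : ℝ :=
  ‖(Matrix.toEuclideanLin A).toContinuousLinearMap‖

def headCols {m : ℕ} (r : ℕ) (h : r ≤ m) (A : Matrix (Fin m) (Fin m) ℝ) :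
    Matrix (Fin m) (Fin r) ℝ :=
  A.submatrix id (Fin.castLE h)

def tailCols {m : ℕ} (r : ℕ) (h : r ≤ m) (A : Matrix (Fin m) (Fin m) ℝ) :
    Matrix (Fin m) (Fin (m - r)) ℝ :=
  A.submatrix id fun j => Fin.cast (Nat.add_sub_cancel' h) (Fin.natAdd r j)

open scoped Matrix.Norms.L2Operator

namespace Matrix

variable {ι κ α β γ : Type*}

section L2

variable [Fintype ι] [Fintype κ] [DecidableEq κ]

lemma norm_toEuclideanLin_le (A : Matrix ι κ ℝ) (x : EuclideanSpace ℝ κ) :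
    ‖toEuclideanLin A x‖ ≤ ‖A‖ * ‖x‖ :=
  (toEuclideanLin A).toContinuousLinearMap.le_opNorm x

lemma l2_opNorm_le_of_sq_le {A : Matrix ι κ ℝ} {c : ℝ} (hc : 0 ≤ c)
    (h : ∀ x, ‖toEuclideanLin A x‖ ^ 2 ≤ c ^ 2 * ‖x‖ ^ 2) : ‖A‖ ≤ c :=
  (toEuclideanLin A).toContinuousLinearMap.opNorm_le_bound hc fun x =>
    le_of_sq_le_sq (by rw [mul_pow]; exact h x) (by positivity)

lemma l2_opNorm_transpose [DecidableEq ι] (A : Matrix ι κ ℝ) : ‖Aᵀ‖ = ‖A‖ := by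
  rw [← conjTranspose_eq_transpose_of_trivial, l2_opNorm_conjTranspose]

lemma norm_toEuclideanLin_of_transpose_mul_self {A : Matrix ι κ ℝ} (hA : Aᵀ * A = 1)
    (x : EuclideanSpace ℝ κ) : ‖toEuclideanLin A x‖ = ‖x‖ := by
  rw [← sq_eq_sq₀ (norm_nonneg _) (norm_nonneg _), ← real_inner_self_eq_norm_sq,
    ← real_inner_self_eq_norm_sq, EuclideanSpace.inner_eq_star_dotProduct,
    EuclideanSpace.inner_eq_star_dotProduct]
  simp only [toLpLin_apply, star_trivial]
  rw [dotProduct_mulVec, ← mulVec_transpose, mulVec_mulVec, hA, one_mulVec]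

lemma l2_opNorm_le_one_of_transpose_mul_self {A : Matrix ι κ ℝ} (hA : Aᵀ * A = 1) :
    ‖A‖ ≤ 1 :=
  (toEuclideanLin A).toContinuousLinearMap.opNorm_le_bound zero_le_one fun x => by
    rw [one_mul]; exact (norm_toEuclideanLin_of_transpose_mul_self hA x).le

lemma l2_opNorm_mul_mul_le_of_le_one [Fintype α] [DecidableEq α] [Fintype β] [DecidableEq ι]
    {A : Matrix β ι ℝ} {C : Matrix κ α ℝ} (hA : ‖A‖ ≤ 1) (hC : ‖C‖ ≤ 1) (F : Matrix ι κ ℝ) :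
    ‖A * F * C‖ ≤ ‖F‖ :=
  calc ‖A * F * C‖ ≤ ‖A‖ * ‖F‖ * ‖C‖ :=
        (l2_opNorm_mul _ _).trans (by gcongr; exact l2_opNorm_mul _ _)
    _ ≤ 1 * ‖F‖ * 1 := by gcongr
    _ = ‖F‖ := by ring

lemma l2_opNorm_le_l2_opNorm_mul_diagonal_div [Fintype α] [DecidableEq α] [Fintype β]
    (Z : Matrix β α ℝ) {d : α → ℝ} {δ : ℝ} (hδ : 0 < δ) (hd : ∀ i, δ ≤ d i) :
    ‖Z‖ ≤ ‖Z * diagonal d‖ / δ := by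
  have hinv : ‖(fun i => (d i)⁻¹)‖ ≤ δ⁻¹ :=
    (pi_norm_le_iff_of_nonneg (by positivity)).mpr fun i => by
      rw [Real.norm_eq_abs, abs_inv, abs_of_pos (hδ.trans_le (hd i))]
      exact inv_anti₀ hδ (hd i)
  have hZ : Z = Z * diagonal d * diagonal (fun i => (d i)⁻¹) := by
    rw [Matrix.mul_assoc, diagonal_mul_diagonal,
      funext fun i => mul_inv_cancel₀ (hδ.trans_le (hd i)).ne', diagonal_one, Matrix.mul_one]
  calc ‖Z‖ ≤ ‖Z * diagonal d‖ * δ⁻¹ := by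
        conv_lhs => rw [hZ]
        refine (l2_opNorm_mul _ _).trans ?_
        rw [l2_opNorm_diagonal]
        gcongr
    _ = ‖Z * diagonal d‖ / δ := (div_eq_mul_inv _ _).symm

lemma norm_sq_toEuclideanLin_fromRows [Fintype α] [Fintype β] (A₁ : Matrix α κ ℝ)
    (A₂ : Matrix β κ ℝ) (x : EuclideanSpace ℝ κ) :
    ‖toEuclideanLin (fromRows A₁ A₂) x‖ ^ 2 =
      ‖toEuclideanLin A₁ x‖ ^ 2 + ‖toEuclideanLin A₂ x‖ ^ 2 := by
  simp only [EuclideanSpace.norm_sq_eq, toLpLin_apply, fromRows_mulVec, Fintype.sum_sum_type,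
    Sum.elim_inl, Sum.elim_inr]

end L2

lemma transpose_mul_mul_eq_of_add_eq {R : Type*} [Ring R] [Fintype ι] [Fintype κ] [Fintype α]
    [Fintype γ] [DecidableEq γ]
    {U₁ : Matrix ι α R} {U₂ : Matrix ι β R} {Ut₁ : Matrix ι γ R} {V₁ : Matrix κ α R}
    {Vt₁ : Matrix κ γ R} {S : Matrix α α R} {S' : Matrix γ γ R} {B F : Matrix ι κ R}
    (hU : U₂ᵀ * U₁ = 0) (hVt : Vt₁ᵀ * Vt₁ = 1) (hB : B = U₁ * S * V₁ᵀ)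
    (hBF : B + F = Ut₁ * S' * Vt₁ᵀ) :
    U₂ᵀ * F * Vt₁ = U₂ᵀ * Ut₁ * S' := by
  rw [eq_sub_of_add_eq' hBF, hB, Matrix.mul_sub, Matrix.sub_mul]
  simp only [Matrix.mul_assoc]
  rw [hVt, ← Matrix.mul_assoc U₂ᵀ U₁, hU, Matrix.zero_mul, Matrix.mul_one, sub_zero]

lemma transpose_mul_diagonal_mul_transpose {R : Type*} [CommSemiring R] [Fintype α]
    [DecidableEq α] (A : Matrix ι α R) (d : α → R) (C : Matrix κ α R) :
    (A * diagonal d * Cᵀ)ᵀ = C * diagonal d * Aᵀ := by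
  rw [transpose_mul, transpose_mul, transpose_transpose, diagonal_transpose, Matrix.mul_assoc]

section Blocks

variable [Fintype α] [DecidableEq α] [Fintype β] [DecidableEq β]

lemma norm_sq_toBlocks₁₁_add_norm_sq_toBlocks₂₁ {W : Matrix (α ⊕ β) (α ⊕ β) ℝ}
    (hW : Wᵀ * W = 1) (x : EuclideanSpace ℝ α) :
    ‖toEuclideanLin W.toBlocks₁₁ x‖ ^ 2 + ‖toEuclideanLin W.toBlocks₂₁ x‖ ^ 2 = ‖x‖ ^ 2 := by
  have hcols : fromRows W.toBlocks₁₁ W.toBlocks₂₁ = W.submatrix id Sum.inl := by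
    ext (i | i) j <;> rfl
  have horth : (W.submatrix id Sum.inl)ᵀ * W.submatrix id Sum.inl = 1 := by
    rw [transpose_submatrix, ← submatrix_mul _ _ _ _ _ Function.bijective_id, hW,
      submatrix_one _ Sum.inl_injective]
  rw [← norm_sq_toEuclideanLin_fromRows, hcols,
    norm_toEuclideanLin_of_transpose_mul_self horth]

lemma mul_norm_sq_le_of_transpose {A : Matrix α α ℝ} {t : ℝ}
    (h : ∀ y, t * ‖y‖ ^ 2 ≤ ‖toEuclideanLin Aᵀ y‖ ^ 2) (x : EuclideanSpace ℝ α) :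
    t * ‖x‖ ^ 2 ≤ ‖toEuclideanLin A x‖ ^ 2 := by
  rcases le_or_gt t 0 with ht | ht
  · exact (mul_nonpos_of_nonpos_of_nonneg ht (sq_nonneg _)).trans (sq_nonneg _)
  have hunit : IsUnit Aᵀ.det := by
    refine isUnit_iff_ne_zero.mpr fun hdet => ?_
    obtain ⟨v, hv0, hv⟩ := exists_mulVec_eq_zero_iff.mpr hdet
    have hv' := h (WithLp.toLp 2 v)
    simp only [toLpLin_toLp, toLin'_apply, hv, WithLp.toLp_zero, norm_zero,
      zero_pow two_ne_zero] at hv'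
    exact hv0 (by simpa using nonpos_of_mul_nonpos_right hv' ht)
  have hinvT : ‖Aᵀ⁻¹‖ ≤ (√t)⁻¹ := l2_opNorm_le_of_sq_le (by positivity) fun z => by
    have hz := h (toEuclideanLin Aᵀ⁻¹ z)
    rw [← LinearMap.comp_apply, ← toLpLin_mul_same, mul_nonsing_inv _ hunit, toLpLin_one,
      LinearMap.id_apply] at hz
    rw [inv_pow, Real.sq_sqrt ht.le, inv_mul_eq_div, le_div_iff₀ ht, mul_comm]
    exact hz
  -- `‖A⁻¹‖ = ‖(Aᵀ)⁻¹‖` carries the lower bound from `Aᵀ` over to `A`.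
  have hinv : ‖A⁻¹‖ ≤ (√t)⁻¹ := by rwa [← l2_opNorm_transpose, transpose_nonsing_inv]
  have hAunit : IsUnit A.det := by rwa [det_transpose] at hunit
  calc t * ‖x‖ ^ 2 = t * ‖toEuclideanLin A⁻¹ (toEuclideanLin A x)‖ ^ 2 := by
        rw [← LinearMap.comp_apply, ← toLpLin_mul_same, nonsing_inv_mul _ hAunit, toLpLin_one,
          LinearMap.id_apply]
    _ ≤ t * ((√t)⁻¹ * ‖toEuclideanLin A x‖) ^ 2 := by
        gcongr
        exact (norm_toEuclideanLin_le _ _).trans (by gcongr)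
    _ = ‖toEuclideanLin A x‖ ^ 2 := by
        rw [mul_pow, inv_pow, Real.sq_sqrt ht.le, ← mul_assoc, mul_inv_cancel₀ ht.ne', one_mul]

lemma l2_opNorm_toBlocks₂₁_le_toBlocks₁₂ {W : Matrix (α ⊕ β) (α ⊕ β) ℝ} (hW : Wᵀ * W = 1) :
    ‖W.toBlocks₂₁‖ ≤ ‖W.toBlocks₁₂‖ := by
  have hWt : Wᵀᵀ * Wᵀ = 1 := by rw [transpose_transpose]; exact mul_eq_one_comm.mp hW
  have hrows : ∀ y, (1 - ‖W.toBlocks₁₂‖ ^ 2) * ‖y‖ ^ 2 ≤ ‖toEuclideanLin W.toBlocks₁₁ᵀ y‖ ^ 2 :=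
    fun y => by
      have hsum := norm_sq_toBlocks₁₁_add_norm_sq_toBlocks₂₁ hWt y
      have hle : ‖toEuclideanLin W.toBlocks₁₂ᵀ y‖ ^ 2 ≤ ‖W.toBlocks₁₂‖ ^ 2 * ‖y‖ ^ 2 := by
        rw [← mul_pow, ← l2_opNorm_transpose]
        exact pow_le_pow_left₀ (norm_nonneg _) (norm_toEuclideanLin_le _ y) 2
      change ‖toEuclideanLin W.toBlocks₁₁ᵀ y‖ ^ 2 + ‖toEuclideanLin W.toBlocks₁₂ᵀ y‖ ^ 2 = _
        at hsum
      linarith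
  refine l2_opNorm_le_of_sq_le (norm_nonneg _) fun x => ?_
  have hsum := norm_sq_toBlocks₁₁_add_norm_sq_toBlocks₂₁ hW x
  have hlow := mul_norm_sq_le_of_transpose hrows x
  linarith

end Blocks

end Matrix

lemma specNorm_eq_l2_opNorm {m n : ℕ} (A : Matrix (Fin m) (Fin n) ℝ) : specNorm A = ‖A‖ := rfl

section Columns

variable {m r : ℕ} (h : r ≤ m) {U : Matrix (Fin m) (Fin m) ℝ}

lemma transpose_headCols_mul_headCols (hU : Uᵀ * U = 1) :
    (headCols r h U)ᵀ * headCols r h U = 1 := by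
  rw [headCols, transpose_submatrix, ← submatrix_mul _ _ _ _ _ Function.bijective_id, hU,
    submatrix_one _ (Fin.castLE_injective h)]

lemma transpose_tailCols_mul_tailCols (hU : Uᵀ * U = 1) :
    (tailCols r h U)ᵀ * tailCols r h U = 1 := by
  rw [tailCols, transpose_submatrix, ← submatrix_mul _ _ _ _ _ Function.bijective_id, hU]
  exact submatrix_one _ ((Fin.cast_injective _).comp (Fin.natAdd_injective _ _))

lemma transpose_tailCols_mul_headCols (hU : Uᵀ * U = 1) :
    (tailCols r h U)ᵀ * headCols r h U = 0 := by
  rw [tailCols, headCols, transpose_submatrix, ← submatrix_mul _ _ _ _ _ Function.bijective_id,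
    hU]
  ext i j
  simp only [submatrix_apply, one_apply, Fin.ext_iff, Fin.val_cast, Fin.val_natAdd,
    Fin.val_castLE, Matrix.zero_apply]
  exact if_neg (by omega)

lemma l2_opNorm_transpose_tailCols_mul_headCols_le {Ut : Matrix (Fin m) (Fin m) ℝ}
    (hU : Uᵀ * U = 1) (hUt : Utᵀ * Ut = 1) :
    ‖(tailCols r h U)ᵀ * headCols r h Ut‖ ≤ ‖(tailCols r h Ut)ᵀ * headCols r h U‖ := by
  let e : Fin r ⊕ Fin (m - r) ≃ Fin m := finSumFinEquiv.trans (finCongr (Nat.add_sub_cancel' h))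
  have hW : ((Uᵀ * Ut).submatrix e e)ᵀ * (Uᵀ * Ut).submatrix e e = 1 := by
    rw [transpose_submatrix, submatrix_mul_equiv, transpose_mul, transpose_transpose,
      Matrix.mul_assoc, ← Matrix.mul_assoc U, mul_eq_one_comm.mp hU, Matrix.one_mul, hUt,
      submatrix_one_equiv]
  have h₂₁ : ((Uᵀ * Ut).submatrix e e).toBlocks₂₁ = (tailCols r h U)ᵀ * headCols r h Ut := rfl
  have h₁₂ : ((Uᵀ * Ut).submatrix e e).toBlocks₁₂ = ((tailCols r h Ut)ᵀ * headCols r h U)ᵀ := by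
    rw [transpose_mul, transpose_transpose]; rfl
  have hblocks := l2_opNorm_toBlocks₂₁_le_toBlocks₁₂ hW
  rwa [h₂₁, h₁₂, l2_opNorm_transpose] at hblocks

end Columns

lemma mul_mul_transpose_eq_headCols {m n r : ℕ} (hrm : r ≤ m) (hrn : r ≤ n)
    {S : Matrix (Fin m) (Fin n) ℝ} {sg : Fin r → ℝ}
    (hS : ∀ (i : Fin m) (j : Fin n),
      S i j = if h : (i : ℕ) = (j : ℕ) ∧ (i : ℕ) < r then sg ⟨i, h.2⟩ else 0)
    (U : Matrix (Fin m) (Fin m) ℝ) (V : Matrix (Fin n) (Fin n) ℝ) :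
    U * S * Vᵀ = headCols r hrm U * diagonal sg * (headCols r hrn V)ᵀ := by
  have hS' : S = headCols r hrm 1 * diagonal sg * (headCols r hrn 1)ᵀ := by
    ext i j
    rw [mul_apply]
    simp only [mul_diagonal, transpose_apply, headCols, submatrix_apply, id, one_apply,
      Fin.ext_iff, Fin.val_castLE, hS]
    by_cases hij : (i : ℕ) = j ∧ (i : ℕ) < r
    · rw [dif_pos hij, Fintype.sum_eq_single ⟨i, hij.2⟩ fun k hk => by
        simp only [ne_eq, Fin.ext_iff] at hk; simp [Ne.symm hk]]
      simp [hij.1]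
    · rw [dif_neg hij]
      refine (Finset.sum_eq_zero fun k _ => ?_).symm
      split_ifs with hik hjk <;> try simp
      exact absurd ⟨hik.trans hjk.symm, hik ▸ k.isLt⟩ hij
  have hcols {k : ℕ} (hk : r ≤ k) (A : Matrix (Fin k) (Fin k) ℝ) :
      A * headCols r hk 1 = headCols r hk A :=
    mul_submatrix_one (Equiv.refl _) _ A
  rw [hS', ← hcols hrm U, ← hcols hrn V, transpose_mul]
  simp only [Matrix.mul_assoc]

lemma l2_opNorm_transpose_tailCols_mul_headCols_le_div {m n r : ℕ} (hrm : r ≤ m) (hrn : r ≤ n)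
    {B F : Matrix (Fin m) (Fin n) ℝ} {U Ut : Matrix (Fin m) (Fin m) ℝ}
    {Vt : Matrix (Fin n) (Fin n) ℝ} {V₁ : Matrix (Fin n) (Fin r) ℝ} {S : Matrix (Fin r) (Fin r) ℝ}
    {d : Fin r → ℝ} {δ : ℝ} (hU : Uᵀ * U = 1) (hVt : Vtᵀ * Vt = 1) (hδ : 0 < δ)
    (hd : ∀ i, δ ≤ d i) (hB : B = headCols r hrm U * S * V₁ᵀ)
    (hBF : B + F = headCols r hrm Ut * diagonal d * (headCols r hrn Vt)ᵀ) :
    ‖(tailCols r hrm U)ᵀ * headCols r hrm Ut‖ ≤ ‖F‖ / δ :=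
  calc ‖(tailCols r hrm U)ᵀ * headCols r hrm Ut‖
      ≤ ‖(tailCols r hrm U)ᵀ * headCols r hrm Ut * diagonal d‖ / δ :=
        l2_opNorm_le_l2_opNorm_mul_diagonal_div _ hδ hd
    _ = ‖(tailCols r hrm U)ᵀ * F * headCols r hrn Vt‖ / δ := by
        rw [transpose_mul_mul_eq_of_add_eq (transpose_tailCols_mul_headCols hrm hU)
          (transpose_headCols_mul_headCols hrn hVt) hB hBF]
    _ ≤ ‖F‖ / δ := by
        gcongr
        refine l2_opNorm_mul_mul_le_of_le_one ?_
          (l2_opNorm_le_one_of_transpose_mul_self (transpose_headCols_mul_headCols hrn hVt)) F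
        rw [l2_opNorm_transpose]
        exact l2_opNorm_le_one_of_transpose_mul_self (transpose_tailCols_mul_tailCols hrm hU)

lemma l2_opNorm_transpose_tailCols_mul_headCols_le_div_max {m n r : ℕ} (hrm : r ≤ m)
    (hrn : r ≤ n) {B F : Matrix (Fin m) (Fin n) ℝ} {U Ut : Matrix (Fin m) (Fin m) ℝ}
    {V Vt : Matrix (Fin n) (Fin n) ℝ} {d dt : Fin r → ℝ} {δ δt : ℝ}
    (hU : Uᵀ * U = 1) (hV : Vᵀ * V = 1) (hUt : Utᵀ * Ut = 1) (hVt : Vtᵀ * Vt = 1)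
    (hδ : 0 < δ) (hδt : 0 < δt) (hd : ∀ i, δ ≤ d i) (hdt : ∀ i, δt ≤ dt i)
    (hB : B = headCols r hrm U * diagonal d * (headCols r hrn V)ᵀ)
    (hBF : B + F = headCols r hrm Ut * diagonal dt * (headCols r hrn Vt)ᵀ) :
    ‖(tailCols r hrm U)ᵀ * headCols r hrm Ut‖ ≤ ‖F‖ / max δ δt := by
  have hle_dt := l2_opNorm_transpose_tailCols_mul_headCols_le_div hrm hrn hU hVt hδt hdt hB hBF
  have hle_d : ‖(tailCols r hrm U)ᵀ * headCols r hrm Ut‖ ≤ ‖F‖ / δ := by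
    refine (l2_opNorm_transpose_tailCols_mul_headCols_le hrm hU hUt).trans ?_
    rw [← norm_neg F]
    exact l2_opNorm_transpose_tailCols_mul_headCols_le_div hrm hrn hUt hV hδ hd hBF
      (by rw [add_neg_cancel_right, hB])
  rcases max_choice δ δt with hmax | hmax <;> rw [hmax] <;> assumption

/-- Wedin-type sin Θ bound in the spectral norm for the singular subspaces
of two rank-r matrices B and B̃ = B + F:
max{ ‖U₂ᵀŨ₁‖₂, ‖V₂ᵀṼ₁‖₂ } ≤ ‖F‖₂ / max{σ_r, σ̃_r}. -/
theorem wedin_sin_theta_spec {m n r : ℕ} (hr : 1 ≤ r) (hrm : r ≤ m) (hrn : r ≤ n)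
    (B F : Matrix (Fin m) (Fin n) ℝ)
    (U Ut : Matrix (Fin m) (Fin m) ℝ) (V Vt : Matrix (Fin n) (Fin n) ℝ)
    (S St : Matrix (Fin m) (Fin n) ℝ) (sg sgt : Fin r → ℝ)
    (hU : Uᵀ * U = 1) (hV : Vᵀ * V = 1) (hUt : Utᵀ * Ut = 1) (hVt : Vtᵀ * Vt = 1)
    (hS : ∀ (i : Fin m) (j : Fin n),
      S i j = if h : (i : ℕ) = (j : ℕ) ∧ (i : ℕ) < r then sg ⟨i, h.2⟩ else 0)
    (hSt : ∀ (i : Fin m) (j : Fin n),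
      St i j = if h : (i : ℕ) = (j : ℕ) ∧ (i : ℕ) < r then sgt ⟨i, h.2⟩ else 0)
    (hord : ∀ i j : Fin r, i ≤ j → sg j ≤ sg i)
    (hordt : ∀ i j : Fin r, i ≤ j → sgt j ≤ sgt i)
    (hpos : ∀ i, 0 < sg i) (hpost : ∀ i, 0 < sgt i)
    (hB : B = U * S * Vᵀ) (hBt : B + F = Ut * St * Vtᵀ) :
    max (specNorm ((tailCols r hrm U)ᵀ * headCols r hrm Ut))
        (specNorm ((tailCols r hrn V)ᵀ * headCols r hrn Vt))
      ≤ specNorm F / max (sg ⟨r - 1, by omega⟩) (sgt ⟨r - 1, by omega⟩) := by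
  have hlast {s : Fin r → ℝ} (hs : ∀ i j : Fin r, i ≤ j → s j ≤ s i) (i : Fin r) :
      s ⟨r - 1, by omega⟩ ≤ s i :=
    hs i _ (Fin.le_def.mpr (by have := i.isLt; simp only; omega))
  have hB₁ := hB.trans (mul_mul_transpose_eq_headCols hrm hrn hS U V)
  have hBF₁ := hBt.trans (mul_mul_transpose_eq_headCols hrm hrn hSt Ut Vt)
  simp only [specNorm_eq_l2_opNorm]
  refine max_le (l2_opNorm_transpose_tailCols_mul_headCols_le_div_max hrm hrn hU hV hUt hVt
    (hpos _) (hpost _) (hlast hord) (hlast hordt) hB₁ hBF₁) ?_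
  have hBT : Bᵀ = headCols r hrn V * diagonal sg * (headCols r hrm U)ᵀ := by
    rw [hB₁, transpose_mul_diagonal_mul_transpose]
  have hBFT : Bᵀ + Fᵀ = headCols r hrn Vt * diagonal sgt * (headCols r hrm Ut)ᵀ := by
    rw [← transpose_add, hBF₁, transpose_mul_diagonal_mul_transpose]
  rw [← l2_opNorm_transpose F]
  exact l2_opNorm_transpose_tailCols_mul_headCols_le_div_max hrn hrm hV hU hVt hUt
    (hpos _) (hpost _) (hlast hord) (hlast hordt) hBT hBFT
end

section
/- Let n ≥ m ≥ r ≥ 1 with n > m or r < n, and let B, B̃ ∈ ℝ^{n×m} both have rank r. Let B = UΣVᵀ and B̃ = ŨΣ̃Ṽᵀ be full singular value decompositions with U ∈ 𝕆^{n×n}, V ∈ 𝕆^{m×m}, singular values σ_1 ≥ … ≥ σ_r > 0 of B and σ̃_1 ≥ … ≥ σ̃_r > 0 of B̃, and write U₁ = U_{(:,1:r)}, V₁ = V_{(:,1:r)}, Ũ₁ = Ũ_{(:,1:r)}, Ṽ₁ = Ṽ_{(:,1:r)}. Let Q = U₁V₁ᵀ and Q̃ = Ũ₁Ṽ₁ᵀ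 be the partial isometry factors of the canonical polar decompositions of B and B̃. Then ‖Q − Q̃‖₂ ≤ √( 4/(σ_r + σ̃_r)² + 2/(max{σ_r, σ̃_r})² ) · ‖B̃ − B‖₂. -/
open Matrix

noncomputable def M2C {a b : ℕ} (A : Matrix (Fin a) (Fin b) ℝ) :
    EuclideanSpace ℝ (Fin b) →L[ℝ] EuclideanSpace ℝ (Fin a) :=
  (Matrix.toEuclideanLin A).toContinuousLinearMap

lemma specNorm_eq {a b : ℕ} (A : Matrix (Fin a) (Fin b) ℝ) : specNorm A = ‖M2C A‖ := rfl

lemma M2C_apply {a b : ℕ} (A : Matrix (Fin a) (Fin b) ℝ) (x : EuclideanSpace ℝ (Fin b)) :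
    M2C A x = (WithLp.equiv 2 (Fin a → ℝ)).symm (A *ᵥ (WithLp.equiv 2 (Fin b → ℝ)) x) := by
  simp [M2C, Matrix.toEuclideanLin_apply]

lemma M2C_mul {a b c : ℕ} (A : Matrix (Fin a) (Fin b) ℝ) (B : Matrix (Fin b) (Fin c) ℝ) :
    M2C (A * B) = (M2C A).comp (M2C B) := by
  ext x
  simp [M2C_apply, Matrix.mulVec_mulVec]

lemma M2C_transpose {a b : ℕ} (A : Matrix (Fin a) (Fin b) ℝ) :
    M2C Aᵀ = ContinuousLinearMap.adjoint (M2C A) := by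
  unfold M2C
  rw [show Aᵀ = A.conjTranspose by ext i j; simp [Matrix.conjTranspose_apply]]
  rw [Matrix.toEuclideanLin_conjTranspose_eq_adjoint, LinearMap.adjoint_eq_toCLM_adjoint]
  ext x; rfl

lemma M2C_one {a : ℕ} : M2C (1 : Matrix (Fin a) (Fin a) ℝ) = ContinuousLinearMap.id ℝ _ := by
  ext x; simp [M2C_apply]

lemma M2C_sub {a b : ℕ} (A B : Matrix (Fin a) (Fin b) ℝ) : M2C (A - B) = M2C A - M2C B := by
  ext x; simp [M2C_apply, Matrix.sub_mulVec]

lemma specNorm_nonneg {a b : ℕ} (A : Matrix (Fin a) (Fin b) ℝ) : 0 ≤ specNorm A :=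
  norm_nonneg _

lemma specNorm_transpose {a b : ℕ} (A : Matrix (Fin a) (Fin b) ℝ) :
    specNorm Aᵀ = specNorm A := by
  rw [specNorm_eq, specNorm_eq, M2C_transpose]
  exact (ContinuousLinearMap.adjoint (𝕜 := ℝ)).norm_map (M2C A) -- guess

lemma specNorm_mul_le {a b c : ℕ} (A : Matrix (Fin a) (Fin b) ℝ) (B : Matrix (Fin b) (Fin c) ℝ) :
    specNorm (A * B) ≤ specNorm A * specNorm B := by
  rw [specNorm_eq, specNorm_eq, specNorm_eq, M2C_mul]
  exact ContinuousLinearMap.opNorm_comp_le _ _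

lemma specNorm_sq {a b : ℕ} (A : Matrix (Fin a) (Fin b) ℝ) :
    specNorm A ^ 2 = specNorm (Aᵀ * A) := by
  rw [specNorm_eq, specNorm_eq, M2C_mul, M2C_transpose, sq]
  exact (ContinuousLinearMap.norm_adjoint_comp_self _).symm

lemma M2C_add {a b : ℕ} (A B : Matrix (Fin a) (Fin b) ℝ) : M2C (A + B) = M2C A + M2C B := by
  ext x; simp [M2C_apply, Matrix.add_mulVec]

lemma specNorm_add_le {a b : ℕ} (A B : Matrix (Fin a) (Fin b) ℝ) :
    specNorm (A + B) ≤ specNorm A + specNorm B := by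
  rw [specNorm_eq, specNorm_eq, specNorm_eq, M2C_add]; exact norm_add_le _ _

lemma M2C_isometry {a b : ℕ} {W : Matrix (Fin a) (Fin b) ℝ} (hW : Wᵀ * W = 1)
    (x : EuclideanSpace ℝ (Fin b)) : ‖M2C W x‖ = ‖x‖ := by
  have h1 : M2C (Wᵀ * W) = (ContinuousLinearMap.adjoint (M2C W)).comp (M2C W) := by
    rw [M2C_mul, M2C_transpose]
  rw [hW, M2C_one] at h1
  have h2 : (inner ℝ (M2C W x) (M2C W x) : ℝ) = inner ℝ x x := by
    rw [← ContinuousLinearMap.adjoint_inner_left]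
    have := congrArg (fun T => (T : EuclideanSpace ℝ (Fin b) →L[ℝ] _) x) h1.symm
    simp only [ContinuousLinearMap.comp_apply] at this
    rw [this]; simp
  rw [@norm_eq_sqrt_re_inner ℝ, @norm_eq_sqrt_re_inner ℝ, h2]

lemma specNorm_isoL {a b c : ℕ} {W : Matrix (Fin a) (Fin b) ℝ} (hW : Wᵀ * W = 1)
    (A : Matrix (Fin b) (Fin c) ℝ) : specNorm (W * A) = specNorm A := by
  rw [specNorm_eq, specNorm_eq]
  apply le_antisymm
  · apply ContinuousLinearMap.opNorm_le_bound _ (norm_nonneg _)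
    intro x
    rw [M2C_mul, ContinuousLinearMap.comp_apply, M2C_isometry hW]
    exact ContinuousLinearMap.le_opNorm _ _
  · apply ContinuousLinearMap.opNorm_le_bound _ (norm_nonneg _)
    intro x
    rw [← M2C_isometry hW (M2C A x), ← ContinuousLinearMap.comp_apply, ← M2C_mul]
    exact ContinuousLinearMap.le_opNorm _ _

lemma specNorm_isoR {a b c : ℕ} {W : Matrix (Fin a) (Fin b) ℝ} (hW : Wᵀ * W = 1)
    (A : Matrix (Fin c) (Fin b) ℝ) : specNorm (A * Wᵀ) = specNorm A := by
  rw [← specNorm_transpose (A * Wᵀ), Matrix.transpose_mul, Matrix.transpose_transpose,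
    specNorm_isoL hW, specNorm_transpose]

lemma specNorm_orth_le_one {a b : ℕ} {W : Matrix (Fin a) (Fin b) ℝ} (hW : Wᵀ * W = 1) :
    specNorm W ≤ 1 := by
  rw [specNorm_eq]
  apply ContinuousLinearMap.opNorm_le_bound _ zero_le_one
  intro x; rw [M2C_isometry hW, one_mul]

lemma specNorm_orthT_le_one {a b : ℕ} {W : Matrix (Fin a) (Fin b) ℝ} (hW : Wᵀ * W = 1) :
    specNorm Wᵀ ≤ 1 := by
  rw [specNorm_transpose]; exact specNorm_orth_le_one hW

lemma specNorm_pythagoras_col {a b : ℕ} (S T : Matrix (Fin a) (Fin b) ℝ)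
    (h : S * Tᵀ = 0) (h' : T * Sᵀ = 0) :
    specNorm (S + T) ^ 2 ≤ specNorm S ^ 2 + specNorm T ^ 2 := by
  have e1 : specNorm (S + T) ^ 2 = specNorm ((S + T) * (S + T)ᵀ) := by
    rw [← specNorm_transpose (S + T), specNorm_sq, Matrix.transpose_transpose]
  have e2 : (S + T) * (S + T)ᵀ = S * Sᵀ + T * Tᵀ := by
    rw [Matrix.transpose_add]
    rw [Matrix.add_mul, Matrix.mul_add, Matrix.mul_add, h, h']
    abel
  rw [e1, e2]
  calc specNorm (S * Sᵀ + T * Tᵀ) ≤ specNorm (S * Sᵀ) + specNorm (T * Tᵀ) := specNorm_add_le _ _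
    _ = specNorm S ^ 2 + specNorm T ^ 2 := by
        rw [← specNorm_transpose S, specNorm_sq, ← specNorm_transpose T, specNorm_sq]
        simp [Matrix.transpose_transpose]

lemma specNorm_pythagoras_row {a b : ℕ} (S T : Matrix (Fin a) (Fin b) ℝ)
    (h : Sᵀ * T = 0) (h' : Tᵀ * S = 0) :
    specNorm (S + T) ^ 2 ≤ specNorm S ^ 2 + specNorm T ^ 2 := by
  rw [← specNorm_transpose (S + T), ← specNorm_transpose S, ← specNorm_transpose T,
    Matrix.transpose_add]
  apply specNorm_pythagoras_col <;> simp [Matrix.transpose_transpose, h, h']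

lemma norm_le_of_sq_le_sq {E : Type*} [NormedAddCommGroup E] {u : E} {c : ℝ} (hc : 0 ≤ c)
    (h : ‖u‖ ^ 2 ≤ c ^ 2) : ‖u‖ ≤ c := by
  nlinarith [norm_nonneg u]

lemma specNorm_diagonal_le {a : ℕ} (d : Fin a → ℝ) {c : ℝ} (hc : 0 ≤ c)
    (h : ∀ i, |d i| ≤ c) : specNorm (Matrix.diagonal d) ≤ c := by
  rw [specNorm_eq]
  apply ContinuousLinearMap.opNorm_le_bound _ hc
  intro x
  apply norm_le_of_sq_le_sq (by positivity)
  have hx : ‖M2C (Matrix.diagonal d) x‖ ^ 2 = ∑ i, (d i * x i) ^ 2 := by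
    rw [M2C_apply, EuclideanSpace.norm_eq, Real.sq_sqrt (by positivity)]
    congr 1; ext i
    simp only [Matrix.mulVec_diagonal, WithLp.equiv_symm_apply, WithLp.ofLp_toLp]
    rw [Real.norm_eq_abs, sq_abs]; rfl
  have hx2 : ‖x‖ ^ 2 = ∑ i, (x i) ^ 2 := by
    rw [EuclideanSpace.norm_eq, Real.sq_sqrt (by positivity)]
    congr 1; ext i; rw [Real.norm_eq_abs, sq_abs]
  rw [hx, mul_pow, hx2, Finset.mul_sum]
  apply Finset.sum_le_sum
  intro i _
  rw [mul_pow]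
  have h1 := h i
  have h2 : d i ^ 2 ≤ c ^ 2 := by rw [← sq_abs]; exact pow_le_pow_left₀ (abs_nonneg _) h1 2
  nlinarith [sq_nonneg (x i)]

lemma bounded_below_transpose {a : ℕ} {A : Matrix (Fin a) (Fin a) ℝ} {γ : ℝ} (hγ : 0 < γ)
    (h : ∀ x, γ * ‖x‖ ≤ ‖M2C A x‖) : ∀ y, γ * ‖y‖ ≤ ‖M2C Aᵀ y‖ := by
  -- A is invertible
  have hdet : A.det ≠ 0 := by
    intro hd
    obtain ⟨v, hv0, hv⟩ := (Matrix.exists_mulVec_eq_zero_iff).mpr hd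
    have : M2C A ((WithLp.equiv 2 (Fin a → ℝ)).symm v) = 0 := by
      rw [M2C_apply]; simp [hv]
    have h2 := h ((WithLp.equiv 2 (Fin a → ℝ)).symm v)
    rw [this, norm_zero] at h2
    have : ‖(WithLp.equiv 2 (Fin a → ℝ)).symm v‖ = 0 := by nlinarith [norm_nonneg ((WithLp.equiv 2 (Fin a → ℝ)).symm v)]
    exact hv0 (by simpa using norm_eq_zero.mp this)
  have hunit : IsUnit A.det := isUnit_iff_ne_zero.mpr hdet
  have hAB : A * A⁻¹ = 1 := Matrix.mul_nonsing_inv A hunit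
  have hBA : A⁻¹ * A = 1 := Matrix.nonsing_inv_mul A hunit
  -- ‖M2C A⁻¹‖ ≤ 1/γ
  have hinv : ∀ y, ‖M2C A⁻¹ y‖ ≤ γ⁻¹ * ‖y‖ := by
    intro y
    have := h (M2C A⁻¹ y)
    have h3 : M2C A (M2C A⁻¹ y) = y := by
      rw [← ContinuousLinearMap.comp_apply, ← M2C_mul, hAB, M2C_one]; rfl
    rw [h3] at this
    calc ‖M2C A⁻¹ y‖ = γ⁻¹ * (γ * ‖M2C A⁻¹ y‖) := by field_simp
      _ ≤ γ⁻¹ * ‖y‖ := by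
          apply mul_le_mul_of_nonneg_left _ (by positivity)
          exact this
  intro y
  have hid : M2C (A⁻¹)ᵀ (M2C Aᵀ y) = y := by
    rw [← ContinuousLinearMap.comp_apply, ← M2C_mul, ← Matrix.transpose_mul, hAB]
    simp [Matrix.transpose_one, M2C_one]
  have hTnorm : ‖M2C (A⁻¹)ᵀ (M2C Aᵀ y)‖ ≤ γ⁻¹ * ‖M2C Aᵀ y‖ := by
    have hle : ‖M2C (A⁻¹)ᵀ‖ ≤ γ⁻¹ := by
      have h4 : specNorm (A⁻¹)ᵀ = specNorm A⁻¹ := specNorm_transpose _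
      rw [specNorm_eq, specNorm_eq] at h4
      rw [h4]
      apply ContinuousLinearMap.opNorm_le_bound _ (by positivity)
      intro z; exact hinv z
    calc ‖M2C (A⁻¹)ᵀ (M2C Aᵀ y)‖ ≤ ‖M2C (A⁻¹)ᵀ‖ * ‖M2C Aᵀ y‖ := ContinuousLinearMap.le_opNorm _ _
      _ ≤ γ⁻¹ * ‖M2C Aᵀ y‖ := mul_le_mul_of_nonneg_right hle (norm_nonneg _)
  rw [hid] at hTnorm
  calc γ * ‖y‖ ≤ γ * (γ⁻¹ * ‖M2C Aᵀ y‖) := mul_le_mul_of_nonneg_left hTnorm hγ.le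
    _ = ‖M2C Aᵀ y‖ := by field_simp

lemma pyth_identity {p q1 q2 : ℕ} {A : Matrix (Fin p) (Fin q1) ℝ} {B : Matrix (Fin p) (Fin q2) ℝ}
    (h : A * Aᵀ + B * Bᵀ = 1) (x : EuclideanSpace ℝ (Fin p)) :
    ‖M2C Aᵀ x‖ ^ 2 + ‖M2C Bᵀ x‖ ^ 2 = ‖x‖ ^ 2 := by
  have key : ∀ {q : ℕ} (M : Matrix (Fin p) (Fin q) ℝ),
      (inner ℝ x (M2C (M * Mᵀ) x) : ℝ) = ‖M2C Mᵀ x‖ ^ 2 := by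
    intro q M
    rw [M2C_mul, ContinuousLinearMap.comp_apply, M2C_transpose,
      ← ContinuousLinearMap.adjoint_inner_left, ← M2C_transpose]
    exact real_inner_self_eq_norm_sq _
  have h0 := congrArg M2C h
  have h3 := congrArg (fun T => (inner ℝ x (T x) : ℝ)) h0
  simp only [M2C_add, ContinuousLinearMap.add_apply, inner_add_right, M2C_one,
    ContinuousLinearMap.id_apply] at h3
  rw [key A, key B] at h3
  rw [h3, real_inner_self_eq_norm_sq]

lemma offdiag_block_norm_le {p q1 q2 : ℕ} (G : Matrix (Fin p) (Fin p) ℝ)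
    (K : Matrix (Fin p) (Fin q1) ℝ) (T : Matrix (Fin q2) (Fin p) ℝ)
    (h1 : G * Gᵀ + K * Kᵀ = 1) (h2 : Gᵀ * G + Tᵀ * T = 1) :
    specNorm T ≤ specNorm K := by
  have id1 := pyth_identity h1
  have h2' : Gᵀ * (Gᵀ)ᵀ + Tᵀ * (Tᵀ)ᵀ = 1 := by
    rwa [Matrix.transpose_transpose, Matrix.transpose_transpose]
  have id2' := pyth_identity h2'
  have id2 : ∀ x, ‖M2C G x‖ ^ 2 + ‖M2C T x‖ ^ 2 = ‖x‖ ^ 2 := by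
    intro x
    have := id2' x
    rwa [Matrix.transpose_transpose, Matrix.transpose_transpose] at this
  set b := specNorm K with hb
  have hb0 : 0 ≤ b := specNorm_nonneg K
  by_cases hble : 1 ≤ b
  · -- specNorm T ≤ 1 ≤ b
    have : specNorm T ≤ 1 := by
      rw [specNorm_eq]
      apply ContinuousLinearMap.opNorm_le_bound _ zero_le_one
      intro x
      apply norm_le_of_sq_le_sq (by positivity)
      have := id2 x
      nlinarith [sq_nonneg (‖M2C G x‖), norm_nonneg x]
    linarith
  · push_neg at hble
    set γ := Real.sqrt (1 - b ^ 2) with hγdef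
    have hγpos : 0 < γ := Real.sqrt_pos.mpr (by nlinarith)
    have hγsq : γ ^ 2 = 1 - b ^ 2 := Real.sq_sqrt (by nlinarith)
    -- Gᵀ bounded below
    have hGT : ∀ x, γ * ‖x‖ ≤ ‖M2C Gᵀ x‖ := by
      intro x
      have hK : ‖M2C Kᵀ x‖ ≤ b * ‖x‖ := by
        have : ‖M2C Kᵀ‖ = specNorm Kᵀ := rfl
        calc ‖M2C Kᵀ x‖ ≤ ‖M2C Kᵀ‖ * ‖x‖ := ContinuousLinearMap.le_opNorm _ _
          _ = specNorm Kᵀ * ‖x‖ := rfl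
          _ = b * ‖x‖ := by rw [specNorm_transpose]
      have := id1 x
      have hsq : (γ * ‖x‖) ^ 2 ≤ ‖M2C Gᵀ x‖ ^ 2 := by
        rw [mul_pow, hγsq]
        nlinarith [norm_nonneg (M2C Kᵀ x), norm_nonneg x]
      nlinarith [norm_nonneg (M2C Gᵀ x), norm_nonneg x, mul_nonneg hγpos.le (norm_nonneg x)]
    have hG : ∀ x, γ * ‖x‖ ≤ ‖M2C G x‖ := by
      intro x
      have := bounded_below_transpose hγpos hGT x
      rwa [Matrix.transpose_transpose] at this
    rw [hb, specNorm_eq]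
    apply ContinuousLinearMap.opNorm_le_bound _ hb0
    intro x
    apply norm_le_of_sq_le_sq (by positivity)
    have hid := id2 x
    have hGx := hG x
    have h5 : (γ * ‖x‖) ^ 2 ≤ ‖M2C G x‖ ^ 2 := by
      nlinarith [norm_nonneg (M2C G x), mul_nonneg hγpos.le (norm_nonneg x)]
    rw [mul_pow]
    nlinarith [sq_nonneg ‖x‖]

lemma sylvester_diag {a : ℕ} (d dt : Fin a → ℝ) (X C : Matrix (Fin a) (Fin a) ℝ)
    {α β s : ℝ} (hα : 0 < α) (hβ : 0 < β) (hαs : α ≤ s)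
    (hd : ∀ i, α ≤ d i ∧ d i ≤ s) (hdt : ∀ i, β ≤ dt i)
    (heq : Matrix.diagonal dt * X + X * Matrix.diagonal d = C) :
    (α + β) * specNorm X ≤ specNorm C := by
  have hsd : Matrix.diagonal (fun i => dt i + s) * X =
      C + X * Matrix.diagonal (fun i : Fin a => s - d i) := by
    have e1 : Matrix.diagonal (fun i => dt i + s) =
        Matrix.diagonal dt + Matrix.diagonal (fun _ : Fin a => s) := by
      rw [← Matrix.diagonal_add]
    have e2 : Matrix.diagonal (fun i : Fin a => s - d i) =
        Matrix.diagonal (fun _ : Fin a => s) - Matrix.diagonal d := by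
      rw [← Matrix.diagonal_sub]
    have e3 : Matrix.diagonal (fun _ : Fin a => s) * X = X * Matrix.diagonal (fun _ : Fin a => s) := by
      have : Matrix.diagonal (fun _ : Fin a => s) = s • (1 : Matrix (Fin a) (Fin a) ℝ) := by
        ext i j
        by_cases h : i = j <;> simp [Matrix.diagonal_apply, h, Matrix.one_apply]
      rw [this, Matrix.smul_mul, Matrix.mul_smul, Matrix.one_mul, Matrix.mul_one]
    rw [e1, e2, ← heq]
    rw [Matrix.add_mul, Matrix.mul_sub]
    rw [e3]
    abel
  have hinv : Matrix.diagonal (fun i => (dt i + s)⁻¹) *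
      Matrix.diagonal (fun i => dt i + s) = 1 := by
    rw [Matrix.diagonal_mul_diagonal]
    have hfun : (fun i => (dt i + s)⁻¹ * (dt i + s)) = fun _ : Fin a => (1 : ℝ) := by
      funext i
      have : 0 < dt i + s := by have := hdt i; linarith
      field_simp
    rw [hfun, Matrix.diagonal_one]
  have hX : X = Matrix.diagonal (fun i => (dt i + s)⁻¹) *
      (C + X * Matrix.diagonal (fun i : Fin a => s - d i)) := by
    rw [← hsd, ← Matrix.mul_assoc, hinv, Matrix.one_mul]
  have hβs : 0 < β + s := by linarith
  have hn1 : specNorm (Matrix.diagonal (fun i => (dt i + s)⁻¹)) ≤ (β + s)⁻¹ := by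
    apply specNorm_diagonal_le _ (by positivity)
    intro i
    have h1 := hdt i
    have hpos : 0 < dt i + s := by linarith
    rw [abs_of_nonneg (inv_nonneg.mpr hpos.le)]
    apply inv_anti₀ hβs
    linarith
  have hn2 : specNorm (Matrix.diagonal (fun i : Fin a => s - d i)) ≤ s - α := by
    apply specNorm_diagonal_le _ (by linarith)
    intro i
    have h1 := (hd i).1; have h2 := (hd i).2
    rw [abs_of_nonneg (by linarith)]
    linarith
  have key : specNorm X ≤ (β + s)⁻¹ * (specNorm C + specNorm X * (s - α)) := by
    calc specNorm X = specNorm (Matrix.diagonal (fun i => (dt i + s)⁻¹) *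
        (C + X * Matrix.diagonal (fun i : Fin a => s - d i))) := by rw [← hX]
      _ ≤ specNorm (Matrix.diagonal (fun i => (dt i + s)⁻¹)) *
          specNorm (C + X * Matrix.diagonal (fun i : Fin a => s - d i)) := specNorm_mul_le _ _
      _ ≤ (β + s)⁻¹ * (specNorm C + specNorm X * (s - α)) := by
          apply mul_le_mul hn1 _ (specNorm_nonneg _) (by positivity)
          calc specNorm (C + X * Matrix.diagonal (fun i : Fin a => s - d i))
              ≤ specNorm C + specNorm (X * Matrix.diagonal (fun i : Fin a => s - d i)) :=
                specNorm_add_le _ _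
            _ ≤ specNorm C + specNorm X * (s - α) := by
                have := specNorm_mul_le X (Matrix.diagonal (fun i : Fin a => s - d i))
                have h6 : specNorm X * specNorm (Matrix.diagonal (fun i : Fin a => s - d i))
                    ≤ specNorm X * (s - α) :=
                  mul_le_mul_of_nonneg_left hn2 (specNorm_nonneg _)
                linarith
  have hXnn := specNorm_nonneg X
  have hCnn := specNorm_nonneg C
  have := mul_le_mul_of_nonneg_left key hβs.le
  rw [mul_inv_cancel_left₀ (ne_of_gt hβs)] at this
  nlinarith

lemma M2C_neg {a b : ℕ} (A : Matrix (Fin a) (Fin b) ℝ) : M2C (-A) = -(M2C A) := by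
  ext x; simp [M2C_apply, Matrix.neg_mulVec]

lemma specNorm_neg {a b : ℕ} (A : Matrix (Fin a) (Fin b) ℝ) : specNorm (-A) = specNorm A := by
  rw [specNorm_eq, specNorm_eq, M2C_neg, norm_neg]

lemma specNorm_sub_le {a b : ℕ} (A B : Matrix (Fin a) (Fin b) ℝ) :
    specNorm (A - B) ≤ specNorm A + specNorm B := by
  rw [specNorm_eq, specNorm_eq, specNorm_eq, M2C_sub]; exact norm_sub_le _ _

lemma mul_cancel_left {a b c : ℕ} {W : Matrix (Fin a) (Fin b) ℝ} (hW : Wᵀ * W = 1)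
    (X : Matrix (Fin b) (Fin c) ℝ) : Wᵀ * (W * X) = X := by
  rw [← Matrix.mul_assoc, hW, Matrix.one_mul]

lemma specNorm_tri_le {a b c d : ℕ} {W : Matrix (Fin a) (Fin c) ℝ} {W' : Matrix (Fin b) (Fin d) ℝ}
    (hW : Wᵀ * W = 1) (hW' : W'ᵀ * W' = 1) (A : Matrix (Fin a) (Fin b) ℝ) :
    specNorm (Wᵀ * A * W') ≤ specNorm A := by
  calc specNorm (Wᵀ * A * W') ≤ specNorm (Wᵀ * A) * specNorm W' := specNorm_mul_le _ _
    _ ≤ specNorm Wᵀ * specNorm A * specNorm W' := by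
        apply mul_le_mul_of_nonneg_right (specNorm_mul_le _ _) (specNorm_nonneg _)
    _ ≤ 1 * specNorm A * 1 := by
        apply mul_le_mul
        · exact mul_le_mul_of_nonneg_right (specNorm_orthT_le_one hW) (specNorm_nonneg _)
        · exact specNorm_orth_le_one hW'
        · exact specNorm_nonneg _
        · exact mul_nonneg zero_le_one (specNorm_nonneg _)
    _ = specNorm A := by ring

lemma mul_chain_zero {a b c d : ℕ} {P : Matrix (Fin a) (Fin b) ℝ} {Q : Matrix (Fin b) (Fin c) ℝ}
    (h : P * Q = 0) (Z : Matrix (Fin c) (Fin d) ℝ) : P * (Q * Z) = 0 := by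
  rw [← Matrix.mul_assoc, h, Matrix.zero_mul]

lemma key_bound {n m r : ℕ}
    (U1 Ut1 : Matrix (Fin n) (Fin r) ℝ) (V1 Vt1 : Matrix (Fin m) (Fin r) ℝ)
    (Ut2 : Matrix (Fin n) (Fin (n - r)) ℝ) (V2 Vt2 : Matrix (Fin m) (Fin (m - r)) ℝ)
    (sg sgt : Fin r → ℝ) (σ σt s : ℝ)
    (hσ : 0 < σ) (hσt : 0 < σt) (hσs : σ ≤ s)
    (hsg : ∀ i, σ ≤ sg i ∧ sg i ≤ s) (hsgt : ∀ i, σt ≤ sgt i)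
    (hU1 : U1ᵀ * U1 = 1) (hV1 : V1ᵀ * V1 = 1) (hUt1 : Ut1ᵀ * Ut1 = 1) (hVt1 : Vt1ᵀ * Vt1 = 1)
    (hV2 : V2ᵀ * V2 = 1) (hVt2 : Vt2ᵀ * Vt2 = 1) (hUt2 : Ut2ᵀ * Ut2 = 1)
    (hVfull : V1 * V1ᵀ + V2 * V2ᵀ = 1) (hVtfull : Vt1 * Vt1ᵀ + Vt2 * Vt2ᵀ = 1)
    (hUtfull : Ut1 * Ut1ᵀ + Ut2 * Ut2ᵀ = 1)
    (hV12 : V1ᵀ * V2 = 0) (hVt12 : Vt1ᵀ * Vt2 = 0) (hUt12 : Ut2ᵀ * Ut1 = 0)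
    (B Bt : Matrix (Fin n) (Fin m) ℝ)
    (hB : B = U1 * Matrix.diagonal sg * V1ᵀ) (hBt : Bt = Ut1 * Matrix.diagonal sgt * Vt1ᵀ) :
    specNorm (U1 * V1ᵀ - Ut1 * Vt1ᵀ) ^ 2 ≤
      (4 / (σ + σt) ^ 2 + 2 / σ ^ 2) * specNorm (Bt - B) ^ 2 := by
  set Sg := Matrix.diagonal sg with hSg
  set Sgt := Matrix.diagonal sgt with hSgt
  set E := Bt - B with hE
  set e := specNorm E with he
  have he0 : 0 ≤ e := specNorm_nonneg _
  set D := U1 * V1ᵀ - Ut1 * Vt1ᵀ with hD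
  set Y := Ut1ᵀ * U1 - Vt1ᵀ * V1 with hY
  have hUt21 : Ut1ᵀ * Ut2 = 0 := by
    have h0 := congrArg Matrix.transpose hUt12
    simpa [Matrix.transpose_mul] using h0
  have hsgne : ∀ i, sg i ≠ 0 := fun i => ne_of_gt (lt_of_lt_of_le hσ (hsg i).1)
  set Sginv := Matrix.diagonal (fun i => (sg i)⁻¹) with hSginv
  have hSgSginv : Sg * Sginv = 1 := by
    rw [hSg, hSginv, Matrix.diagonal_mul_diagonal]
    have hfun : (fun i => sg i * (sg i)⁻¹) = fun _ : Fin r => (1 : ℝ) := by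
      funext i; field_simp [hsgne i]
    rw [hfun, Matrix.diagonal_one]
  have hSginvSg : Sginv * Sg = 1 := by
    rw [hSg, hSginv, Matrix.diagonal_mul_diagonal]
    have hfun : (fun i => (sg i)⁻¹ * sg i) = fun _ : Fin r => (1 : ℝ) := by
      funext i; field_simp [hsgne i]
    rw [hfun, Matrix.diagonal_one]
  have hSginvNorm : specNorm Sginv ≤ σ⁻¹ := by
    apply specNorm_diagonal_le _ (by positivity)
    intro i
    have h1 := (hsg i).1
    rw [abs_of_nonneg (inv_nonneg.mpr (le_trans hσ.le h1))]
    exact inv_anti₀ hσ h1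
  -- transposes of B, Bt
  have hBT : Bᵀ = V1 * Sg * U1ᵀ := by
    rw [hB]; simp only [Matrix.transpose_mul, Matrix.transpose_transpose, hSg,
      Matrix.diagonal_transpose, Matrix.mul_assoc]
  have hBtT : Btᵀ = Vt1 * Sgt * Ut1ᵀ := by
    rw [hBt]; simp only [Matrix.transpose_mul, Matrix.transpose_transpose, hSgt,
      Matrix.diagonal_transpose, Matrix.mul_assoc]
  -- Sylvester equation for Y
  have hYeq : Sgt * Y + Y * Sg = Vt1ᵀ * Eᵀ * U1 - Ut1ᵀ * E * V1 := by
    have A1 : Vt1ᵀ * Btᵀ * U1 = Sgt * (Ut1ᵀ * U1) := by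
      rw [hBtT]
      simp only [Matrix.mul_assoc]
      rw [mul_cancel_left hVt1]
    have A2 : Vt1ᵀ * Bᵀ * U1 = (Vt1ᵀ * V1) * Sg := by
      rw [hBT]
      simp only [Matrix.mul_assoc]
      rw [hU1, Matrix.mul_one]
    have A3 : Ut1ᵀ * Bt * V1 = Sgt * (Vt1ᵀ * V1) := by
      rw [hBt]
      simp only [Matrix.mul_assoc]
      rw [mul_cancel_left hUt1]
    have A4 : Ut1ᵀ * B * V1 = (Ut1ᵀ * U1) * Sg := by
      rw [hB]
      simp only [Matrix.mul_assoc]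
      rw [hV1, Matrix.mul_one]
    have hET : Eᵀ = Btᵀ - Bᵀ := by rw [hE, Matrix.transpose_sub]
    rw [hET, hE]
    rw [Matrix.mul_sub Vt1ᵀ Btᵀ Bᵀ, Matrix.mul_sub Ut1ᵀ Bt B,
        Matrix.sub_mul (Vt1ᵀ * Btᵀ) (Vt1ᵀ * Bᵀ) U1, Matrix.sub_mul (Ut1ᵀ * Bt) (Ut1ᵀ * B) V1,
        A1, A2, A3, A4, hY, Matrix.mul_sub Sgt (Ut1ᵀ * U1) (Vt1ᵀ * V1),
        Matrix.sub_mul (Ut1ᵀ * U1) (Vt1ᵀ * V1) Sg]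
    abel
  have hCnorm : specNorm (Vt1ᵀ * Eᵀ * U1 - Ut1ᵀ * E * V1) ≤ 2 * e := by
    have c1 : specNorm (Vt1ᵀ * Eᵀ * U1) ≤ e := by
      have := specNorm_tri_le hVt1 hU1 Eᵀ
      rwa [specNorm_transpose] at this
    have c2 : specNorm (Ut1ᵀ * E * V1) ≤ e := specNorm_tri_le hUt1 hV1 E
    calc specNorm (Vt1ᵀ * Eᵀ * U1 - Ut1ᵀ * E * V1)
        ≤ specNorm (Vt1ᵀ * Eᵀ * U1) + specNorm (Ut1ᵀ * E * V1) := specNorm_sub_le _ _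
      _ ≤ 2 * e := by linarith
  have hYnorm : (σ + σt) * specNorm Y ≤ 2 * e := by
    have := sylvester_diag sg sgt Y (Vt1ᵀ * Eᵀ * U1 - Ut1ᵀ * E * V1) hσ hσt hσs hsg hsgt hYeq
    linarith [this, hCnorm]
  -- bound on Ut2ᵀ * U1
  have hblockU : specNorm (Ut2ᵀ * U1) ≤ σ⁻¹ * e := by
    have e1 : Ut2ᵀ * Bt * V1 = 0 := by
      rw [hBt]
      simp only [Matrix.mul_assoc]
      rw [mul_chain_zero hUt12]
    have e2 : Ut2ᵀ * B * V1 = (Ut2ᵀ * U1) * Sg := by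
      rw [hB]
      simp only [Matrix.mul_assoc]
      rw [hV1, Matrix.mul_one]
    have e3 : (Ut2ᵀ * U1) * Sg = -(Ut2ᵀ * E * V1) := by
      have hexp : Ut2ᵀ * E * V1 = Ut2ᵀ * Bt * V1 - Ut2ᵀ * B * V1 := by
        rw [hE, Matrix.mul_sub Ut2ᵀ Bt B, Matrix.sub_mul (Ut2ᵀ * Bt) (Ut2ᵀ * B) V1]
      rw [hexp, e1, e2, zero_sub, neg_neg]
    have e4 : Ut2ᵀ * U1 = -(Ut2ᵀ * E * V1) * Sginv := by
      have := congrArg (fun X => X * Sginv) e3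
      rw [Matrix.mul_assoc, hSgSginv, Matrix.mul_one] at this
      exact this
    rw [e4, Matrix.neg_mul, specNorm_neg]
    calc specNorm ((Ut2ᵀ * E * V1) * Sginv)
        ≤ specNorm (Ut2ᵀ * E * V1) * specNorm Sginv := specNorm_mul_le _ _
      _ ≤ e * σ⁻¹ := by
          apply mul_le_mul (specNorm_tri_le hUt2 hV1 E) hSginvNorm (specNorm_nonneg _) he0
      _ = σ⁻¹ * e := by ring
  -- bound on V1ᵀ * Vt2 and then Vt1ᵀ * V2
  have hblockK : specNorm (V1ᵀ * Vt2) ≤ σ⁻¹ * e := by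
    have e1 : U1ᵀ * Bt * Vt2 = 0 := by
      rw [hBt]
      simp only [Matrix.mul_assoc]
      rw [hVt12, Matrix.mul_zero, Matrix.mul_zero, Matrix.mul_zero]
    have e2 : U1ᵀ * B * Vt2 = Sg * (V1ᵀ * Vt2) := by
      rw [hB]
      simp only [Matrix.mul_assoc]
      rw [mul_cancel_left hU1]
    have e3 : Sg * (V1ᵀ * Vt2) = -(U1ᵀ * E * Vt2) := by
      have hexp : U1ᵀ * E * Vt2 = U1ᵀ * Bt * Vt2 - U1ᵀ * B * Vt2 := by
        rw [hE, Matrix.mul_sub U1ᵀ Bt B, Matrix.sub_mul (U1ᵀ * Bt) (U1ᵀ * B) Vt2]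
      rw [hexp, e1, e2, zero_sub, neg_neg]
    have e4 : V1ᵀ * Vt2 = -(Sginv * (U1ᵀ * E * Vt2)) := by
      have := congrArg (fun X => Sginv * X) e3
      rw [← Matrix.mul_assoc, hSginvSg, Matrix.one_mul] at this
      rw [this, Matrix.mul_neg]
    rw [e4, specNorm_neg]
    calc specNorm (Sginv * (U1ᵀ * E * Vt2))
        ≤ specNorm Sginv * specNorm (U1ᵀ * E * Vt2) := specNorm_mul_le _ _
      _ ≤ σ⁻¹ * e := by
          apply mul_le_mul hSginvNorm (specNorm_tri_le hU1 hVt2 E) (specNorm_nonneg _)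
            (by positivity)
  -- symmetry lemma for the remaining block
  have hV21 : V2ᵀ * V1 = 0 := by
    have h0 := congrArg Matrix.transpose hV12
    simpa [Matrix.transpose_mul] using h0
  have hblockT : specNorm (Vt1ᵀ * V2) ≤ σ⁻¹ * e := by
    have h1 : (V1ᵀ * Vt1) * (V1ᵀ * Vt1)ᵀ + (V1ᵀ * Vt2) * (V1ᵀ * Vt2)ᵀ = 1 := by
      have hh : (V1ᵀ * Vt1) * (V1ᵀ * Vt1)ᵀ + (V1ᵀ * Vt2) * (V1ᵀ * Vt2)ᵀ =
          V1ᵀ * ((Vt1 * Vt1ᵀ + Vt2 * Vt2ᵀ) * V1) := by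
        simp only [Matrix.transpose_mul, Matrix.transpose_transpose, Matrix.add_mul,
          Matrix.mul_add, Matrix.mul_assoc]
      rw [hh, hVtfull, Matrix.one_mul, hV1]
    have h2 : (V1ᵀ * Vt1)ᵀ * (V1ᵀ * Vt1) + (V2ᵀ * Vt1)ᵀ * (V2ᵀ * Vt1) = 1 := by
      have hh : (V1ᵀ * Vt1)ᵀ * (V1ᵀ * Vt1) + (V2ᵀ * Vt1)ᵀ * (V2ᵀ * Vt1) =
          Vt1ᵀ * ((V1 * V1ᵀ + V2 * V2ᵀ) * Vt1) := by
        simp only [Matrix.transpose_mul, Matrix.transpose_transpose, Matrix.add_mul,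
          Matrix.mul_add, Matrix.mul_assoc]
      rw [hh, hVfull, Matrix.one_mul, hVt1]
    have hT := offdiag_block_norm_le (V1ᵀ * Vt1) (V1ᵀ * Vt2) (V2ᵀ * Vt1) h1 h2
    have heq : Vt1ᵀ * V2 = (V2ᵀ * Vt1)ᵀ := by
      simp [Matrix.transpose_mul]
    rw [heq, specNorm_transpose]
    linarith
  -- splitting D
  set S1 := D * (V1 * V1ᵀ) with hS1def
  set T1 := D * (V2 * V2ᵀ) with hT1def
  have hsplit1 : S1 + T1 = D := by
    rw [hS1def, hT1def, ← Matrix.mul_add, hVfull, Matrix.mul_one]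
  have horth1 : S1 * T1ᵀ = 0 := by
    rw [hS1def, hT1def]
    simp only [Matrix.transpose_mul, Matrix.transpose_transpose, Matrix.mul_assoc]
    rw [mul_chain_zero hV12, Matrix.mul_zero, Matrix.mul_zero]
  have horth1' : T1 * S1ᵀ = 0 := by
    rw [hS1def, hT1def]
    simp only [Matrix.transpose_mul, Matrix.transpose_transpose, Matrix.mul_assoc]
    rw [mul_chain_zero hV21, Matrix.mul_zero, Matrix.mul_zero]
  have hP1 : specNorm D ^ 2 ≤ specNorm S1 ^ 2 + specNorm T1 ^ 2 := by
    rw [← hsplit1]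
    exact specNorm_pythagoras_col S1 T1 horth1 horth1'
  -- value and bound of T1
  have hT1val : T1 = -(Ut1 * (Vt1ᵀ * (V2 * V2ᵀ))) := by
    rw [hT1def, hD, Matrix.sub_mul]
    simp only [Matrix.mul_assoc]
    rw [mul_chain_zero hV12, Matrix.mul_zero, zero_sub]
  have hT1n : specNorm T1 ≤ σ⁻¹ * e := by
    rw [hT1val, specNorm_neg, specNorm_isoL hUt1]
    rw [show Vt1ᵀ * (V2 * V2ᵀ) = (Vt1ᵀ * V2) * V2ᵀ by rw [Matrix.mul_assoc]]
    rw [specNorm_isoR hV2]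
    exact hblockT
  -- second split
  set S2 := Ut1 * (Ut1ᵀ * S1) with hS2def
  set T2 := Ut2 * (Ut2ᵀ * S1) with hT2def
  have hsplit2 : S2 + T2 = S1 := by
    rw [hS2def, hT2def, ← Matrix.mul_assoc Ut1 Ut1ᵀ S1, ← Matrix.mul_assoc Ut2 Ut2ᵀ S1,
      ← Matrix.add_mul, hUtfull, Matrix.one_mul]
  have horth2 : S2ᵀ * T2 = 0 := by
    rw [hS2def, hT2def]
    simp only [Matrix.transpose_mul, Matrix.transpose_transpose, Matrix.mul_assoc]
    rw [mul_chain_zero hUt21, Matrix.mul_zero, Matrix.mul_zero]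
  have horth2' : T2ᵀ * S2 = 0 := by
    rw [hS2def, hT2def]
    simp only [Matrix.transpose_mul, Matrix.transpose_transpose, Matrix.mul_assoc]
    rw [mul_chain_zero hUt12, Matrix.mul_zero, Matrix.mul_zero]
  have hP2 : specNorm S1 ^ 2 ≤ specNorm S2 ^ 2 + specNorm T2 ^ 2 := by
    rw [← hsplit2]
    exact specNorm_pythagoras_row S2 T2 horth2 horth2'
  -- values of S2 and T2
  have hS1val : S1 = U1 * V1ᵀ - Ut1 * (Vt1ᵀ * (V1 * V1ᵀ)) := by
    rw [hS1def, hD, Matrix.sub_mul]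
    simp only [Matrix.mul_assoc]
    rw [mul_cancel_left hV1]
  have hUt1S1 : Ut1ᵀ * S1 = Y * V1ᵀ := by
    rw [hS1val, Matrix.mul_sub, mul_cancel_left hUt1, hY, Matrix.sub_mul]
    simp only [Matrix.mul_assoc]
  have hUt2S1 : Ut2ᵀ * S1 = (Ut2ᵀ * U1) * V1ᵀ := by
    rw [hS1val, Matrix.mul_sub, mul_chain_zero hUt12, sub_zero, ← Matrix.mul_assoc]
  have hS2n : specNorm S2 = specNorm Y := by
    rw [hS2def, hUt1S1, specNorm_isoL hUt1, specNorm_isoR hV1]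
  have hT2n : specNorm T2 ≤ σ⁻¹ * e := by
    rw [hT2def, hUt2S1, specNorm_isoL hUt2, specNorm_isoR hV1]
    exact hblockU
  -- numerics
  have hP : 0 < σ + σt := by linarith
  have hYn : specNorm Y ^ 2 ≤ (2 * e) ^ 2 / (σ + σt) ^ 2 := by
    rw [le_div_iff₀ (by positivity)]
    have h0 : 0 ≤ (σ + σt) * specNorm Y := mul_nonneg hP.le (specNorm_nonneg _)
    calc specNorm Y ^ 2 * (σ + σt) ^ 2 = ((σ + σt) * specNorm Y) ^ 2 := by ring
      _ ≤ (2 * e) ^ 2 := pow_le_pow_left₀ h0 hYnorm 2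
  have hsq : ∀ x : ℝ, 0 ≤ x → x ≤ σ⁻¹ * e → x ^ 2 ≤ e ^ 2 / σ ^ 2 := by
    intro x hx hxe
    have : x ^ 2 ≤ (σ⁻¹ * e) ^ 2 := pow_le_pow_left₀ hx hxe 2
    calc x ^ 2 ≤ (σ⁻¹ * e) ^ 2 := this
      _ = e ^ 2 / σ ^ 2 := by field_simp
  have hb2 := hsq _ (specNorm_nonneg (Ut2ᵀ * U1)) hblockU
  have hT12 := hsq _ (specNorm_nonneg T1) hT1n
  have hfinal : specNorm D ^ 2 ≤ (2 * e) ^ 2 / (σ + σt) ^ 2 + e ^ 2 / σ ^ 2 + e ^ 2 / σ ^ 2 := by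
    rw [hS2n] at hP2
    have ht2sq := hsq _ (specNorm_nonneg T2) hT2n
    linarith [hP1, hP2, hYn, hT12, ht2sq]
  calc specNorm D ^ 2 ≤ (2 * e) ^ 2 / (σ + σt) ^ 2 + e ^ 2 / σ ^ 2 + e ^ 2 / σ ^ 2 := hfinal
    _ = (4 / (σ + σt) ^ 2 + 2 / σ ^ 2) * e ^ 2 := by ring


def tailColsX {m : ℕ} (r : ℕ) (h : r ≤ m) (A : Matrix (Fin m) (Fin m) ℝ) :
    Matrix (Fin m) (Fin (m - r)) ℝ :=
  A.submatrix id (fun j => ⟨r + (j : ℕ), by omega⟩)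

lemma submatrix_mul_transpose {m r1 r2 : ℕ} (A : Matrix (Fin m) (Fin m) ℝ)
    (f : Fin r1 → Fin m) (g : Fin r2 → Fin m) :
    (A.submatrix id f)ᵀ * (A.submatrix id g) = (Aᵀ * A).submatrix f g := by
  ext i j
  simp [Matrix.mul_apply, Matrix.transpose_apply, Matrix.submatrix_apply]

lemma headCols_orth {m r : ℕ} (h : r ≤ m) {A : Matrix (Fin m) (Fin m) ℝ} (hA : Aᵀ * A = 1) :
    (headCols r h A)ᵀ * headCols r h A = 1 := by
  rw [headCols, submatrix_mul_transpose, hA]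
  ext i j
  simp only [Matrix.submatrix_apply, Matrix.one_apply]
  by_cases hij : i = j
  · simp [hij]
  · have : Fin.castLE h i ≠ Fin.castLE h j := by
      intro hc
      have h2 := congrArg Fin.val hc
      simp only [Fin.coe_castLE] at h2
      exact hij (Fin.ext h2)
    simp [hij, this]

lemma tailCols_orth {m r : ℕ} (h : r ≤ m) {A : Matrix (Fin m) (Fin m) ℝ} (hA : Aᵀ * A = 1) :
    (tailColsX r h A)ᵀ * tailColsX r h A = 1 := by
  rw [tailColsX, submatrix_mul_transpose, hA]
  ext i j
  simp only [Matrix.submatrix_apply, Matrix.one_apply]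
  by_cases hij : i = j
  · simp [hij]
  · have : (⟨r + (i : ℕ), by omega⟩ : Fin m) ≠ ⟨r + (j : ℕ), by omega⟩ := by
      intro hc
      have := congrArg Fin.val hc
      simp only at this
      exact hij (by ext; omega)
    simp [hij, this]

lemma head_tail_orth {m r : ℕ} (h : r ≤ m) {A : Matrix (Fin m) (Fin m) ℝ} (hA : Aᵀ * A = 1) :
    (headCols r h A)ᵀ * tailColsX r h A = 0 := by
  rw [headCols, tailColsX, submatrix_mul_transpose, hA]
  ext i j
  simp only [Matrix.submatrix_apply, Matrix.one_apply, Matrix.zero_apply]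
  have : Fin.castLE h i ≠ (⟨r + (j : ℕ), by omega⟩ : Fin m) := by
    intro hc
    have := congrArg Fin.val hc
    simp only [Fin.coe_castLE] at this
    omega
  simp [this]

lemma tail_head_orth {m r : ℕ} (h : r ≤ m) {A : Matrix (Fin m) (Fin m) ℝ} (hA : Aᵀ * A = 1) :
    (tailColsX r h A)ᵀ * headCols r h A = 0 := by
  have h0 := congrArg Matrix.transpose (head_tail_orth h hA)
  simpa [Matrix.transpose_mul] using h0

lemma fin_sum_split {m r : ℕ} (h : r ≤ m) (f : Fin m → ℝ) :
    ((∑ i : Fin r, f (Fin.castLE h i)) + ∑ j : Fin (m - r), f ⟨r + (j : ℕ), by omega⟩) =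
      ∑ c, f c := by
  have hm : r + (m - r) = m := by omega
  rw [← Equiv.sum_comp (finSumFinEquiv.trans (finCongr hm)) f, Fintype.sum_sum_type]
  congr 1
  all_goals
    apply Finset.sum_congr rfl
    intro i _
    congr 1
    apply Fin.ext
    simp

lemma full_split {m r : ℕ} (h : r ≤ m) {A : Matrix (Fin m) (Fin m) ℝ} (hA : Aᵀ * A = 1) :
    headCols r h A * (headCols r h A)ᵀ + tailColsX r h A * (tailColsX r h A)ᵀ = 1 := by
  have hA' : A * Aᵀ = 1 := by
    rw [mul_eq_one_comm] at hA; exact hA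
  rw [← hA']
  ext i j
  simp only [Matrix.add_apply, Matrix.mul_apply, Matrix.transpose_apply,
    Matrix.submatrix_apply, headCols, tailColsX, id]
  exact fin_sum_split h (fun c => A i c * A j c)

lemma mul_headCols_one {m r : ℕ} (h : r ≤ m) (A : Matrix (Fin m) (Fin m) ℝ) :
    A * headCols r h (1 : Matrix (Fin m) (Fin m) ℝ) = headCols r h A := by
  ext i j
  simp [headCols, Matrix.mul_apply, Matrix.one_apply, mul_ite, mul_one, mul_zero,
    Finset.sum_ite_eq']

lemma sqrt_step {x e K : ℝ} (hx : 0 ≤ x) (he : 0 ≤ e) (hK : 0 ≤ K) (h : x ^ 2 ≤ K * e ^ 2) :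
    x ≤ Real.sqrt K * e := by
  have h0 : x = Real.sqrt (x ^ 2) := (Real.sqrt_sq hx).symm
  rw [h0]
  calc Real.sqrt (x ^ 2) ≤ Real.sqrt (K * e ^ 2) := Real.sqrt_le_sqrt h
    _ = Real.sqrt K * Real.sqrt (e ^ 2) := Real.sqrt_mul hK _
    _ = Real.sqrt K * e := by rw [Real.sqrt_sq he]

lemma S_decomp {n m r : ℕ} (hrm : r ≤ m) (hrn : r ≤ n) (S : Matrix (Fin n) (Fin m) ℝ)
    (sg : Fin r → ℝ)
    (hS : ∀ (i : Fin n) (j : Fin m),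
      S i j = if h : (i : ℕ) = (j : ℕ) ∧ (i : ℕ) < r then sg ⟨i, h.2⟩ else 0) :
    S = headCols r hrn (1 : Matrix (Fin n) (Fin n) ℝ) * Matrix.diagonal sg *
        (headCols r hrm (1 : Matrix (Fin m) (Fin m) ℝ))ᵀ := by
  ext i j
  rw [hS i j, Matrix.mul_apply]
  have hterm : ∀ t : Fin r,
      (headCols r hrn (1 : Matrix (Fin n) (Fin n) ℝ) * Matrix.diagonal sg) i t *
        (headCols r hrm (1 : Matrix (Fin m) (Fin m) ℝ))ᵀ t j =
      (if i = Fin.castLE hrn t then (1:ℝ) else 0) * sg t *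
        (if j = Fin.castLE hrm t then (1:ℝ) else 0) := by
    intro t
    rw [Matrix.mul_diagonal]
    simp [headCols, Matrix.one_apply]
  simp only [hterm]
  by_cases hij : (i : ℕ) = (j : ℕ) ∧ (i : ℕ) < r
  · rw [dif_pos hij]
    rw [Finset.sum_eq_single (⟨(i : ℕ), hij.2⟩ : Fin r)]
    · have h1 : i = Fin.castLE hrn ⟨(i : ℕ), hij.2⟩ := by apply Fin.ext; simp
      have h2 : j = Fin.castLE hrm ⟨(i : ℕ), hij.2⟩ := by apply Fin.ext; simp [← hij.1]
      rw [if_pos h1, if_pos h2]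
      ring
    · intro t _ hne
      have : i ≠ Fin.castLE hrn t := by
        intro hc
        apply hne
        apply Fin.ext
        have := congrArg Fin.val hc
        simpa using this.symm
      rw [if_neg this]
      ring
    · intro hmem
      exact absurd (Finset.mem_univ _) hmem
  · rw [dif_neg hij]
    symm
    apply Finset.sum_eq_zero
    intro t _
    by_cases h1 : i = Fin.castLE hrn t
    · have hir : (i : ℕ) = (t : ℕ) := by rw [h1]; simp
      have h2 : j ≠ Fin.castLE hrm t := by
        intro hc
        apply hij
        have hjr : (j : ℕ) = (t : ℕ) := by rw [hc]; simp
        constructor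
        · omega
        · omega
      rw [if_neg h2]
      ring
    · rw [if_neg h1]
      ring

lemma B_decomp {n m r : ℕ} (hrm : r ≤ m) (hrn : r ≤ n)
    (B : Matrix (Fin n) (Fin m) ℝ) (U : Matrix (Fin n) (Fin n) ℝ) (V : Matrix (Fin m) (Fin m) ℝ)
    (S : Matrix (Fin n) (Fin m) ℝ) (sg : Fin r → ℝ)
    (hS : ∀ (i : Fin n) (j : Fin m),
      S i j = if h : (i : ℕ) = (j : ℕ) ∧ (i : ℕ) < r then sg ⟨i, h.2⟩ else 0)
    (hB : B = U * S * Vᵀ) :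
    B = headCols r hrn U * Matrix.diagonal sg * (headCols r hrm V)ᵀ := by
  rw [hB, S_decomp hrm hrn S sg hS]
  rw [← mul_headCols_one hrn U, ← mul_headCols_one hrm V]
  simp only [Matrix.transpose_mul, Matrix.mul_assoc]

/-- Perturbation of the partial isometry factors Q = U₁V₁ᵀ, Q̃ = Ũ₁Ṽ₁ᵀ
of the canonical polar decompositions of two rank-r matrices B, B̃ ∈ ℝ^{n×m}
(n ≥ m, and n > m or r < n):
‖Q − Q̃‖₂ ≤ √( 4/(σ_r + σ̃_r)² + 2/(max{σ_r, σ̃_r})² )·‖B̃ − B‖₂. -/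
theorem polar_factor_perturb_spec {n m r : ℕ} (hr : 1 ≤ r) (hrm : r ≤ m) (hmn : m ≤ n)
    (hcase : m < n ∨ r < n)
    (B Bt : Matrix (Fin n) (Fin m) ℝ)
    (U Ut : Matrix (Fin n) (Fin n) ℝ) (V Vt : Matrix (Fin m) (Fin m) ℝ)
    (S St : Matrix (Fin n) (Fin m) ℝ) (sg sgt : Fin r → ℝ)
    (hU : Uᵀ * U = 1) (hV : Vᵀ * V = 1) (hUt : Utᵀ * Ut = 1) (hVt : Vtᵀ * Vt = 1)
    (hS : ∀ (i : Fin n) (j : Fin m),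
      S i j = if h : (i : ℕ) = (j : ℕ) ∧ (i : ℕ) < r then sg ⟨i, h.2⟩ else 0)
    (hSt : ∀ (i : Fin n) (j : Fin m),
      St i j = if h : (i : ℕ) = (j : ℕ) ∧ (i : ℕ) < r then sgt ⟨i, h.2⟩ else 0)
    (hord : ∀ i j : Fin r, i ≤ j → sg j ≤ sg i)
    (hordt : ∀ i j : Fin r, i ≤ j → sgt j ≤ sgt i)
    (hpos : ∀ i, 0 < sg i) (hpost : ∀ i, 0 < sgt i)
    (hB : B = U * S * Vᵀ) (hBt : Bt = Ut * St * Vtᵀ)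
    (hrkB : B.rank = r) (hrkBt : Bt.rank = r) :
    specNorm (headCols r (hrm.trans hmn) U * (headCols r hrm V)ᵀ -
        headCols r (hrm.trans hmn) Ut * (headCols r hrm Vt)ᵀ)
      ≤ Real.sqrt (4 / (sg ⟨r - 1, by omega⟩ + sgt ⟨r - 1, by omega⟩) ^ 2 +
            2 / max (sg ⟨r - 1, by omega⟩) (sgt ⟨r - 1, by omega⟩) ^ 2) *
          specNorm (Bt - B) := by
  have hrn : r ≤ n := hrm.trans hmn
  have hrpos : 0 < r := hr
  set σ := sg ⟨r - 1, by omega⟩ with hσdef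
  set σt := sgt ⟨r - 1, by omega⟩ with hσtdef
  have hσ : 0 < σ := hpos _
  have hσt : 0 < σt := hpost _
  have hsgb : ∀ i, σ ≤ sg i ∧ sg i ≤ sg ⟨0, by omega⟩ := by
    intro i
    constructor
    · exact hord i ⟨r - 1, by omega⟩ (by rw [Fin.le_def]; simp; omega)
    · exact hord ⟨0, by omega⟩ i (by rw [Fin.le_def]; simp)
  have hsgtb : ∀ i, σt ≤ sgt i ∧ sgt i ≤ sgt ⟨0, by omega⟩ := by
    intro i
    constructor
    · exact hordt i ⟨r - 1, by omega⟩ (by rw [Fin.le_def]; simp; omega)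
    · exact hordt ⟨0, by omega⟩ i (by rw [Fin.le_def]; simp)
  have hB1 := B_decomp hrm hrn B U V S sg hS hB
  have hBt1 := B_decomp hrm hrn Bt Ut Vt St sgt hSt hBt
  have he0 : 0 ≤ specNorm (Bt - B) := specNorm_nonneg _
  have hDnn : 0 ≤ specNorm (headCols r hrn U * (headCols r hrm V)ᵀ -
      headCols r hrn Ut * (headCols r hrm Vt)ᵀ) := specNorm_nonneg _
  rcases le_total σt σ with hc | hc
  · -- max = σ
    have key := key_bound (headCols r hrn U) (headCols r hrn Ut)
      (headCols r hrm V) (headCols r hrm Vt)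
      (tailColsX r hrn Ut) (tailColsX r hrm V) (tailColsX r hrm Vt)
      sg sgt σ σt (sg ⟨0, by omega⟩) hσ hσt ((hsgb ⟨r - 1, by omega⟩).2)
      hsgb (fun i => (hsgtb i).1)
      (headCols_orth hrn hU) (headCols_orth hrm hV) (headCols_orth hrn hUt)
      (headCols_orth hrm hVt)
      (tailCols_orth hrm hV) (tailCols_orth hrm hVt) (tailCols_orth hrn hUt)
      (full_split hrm hV) (full_split hrm hVt) (full_split hrn hUt)
      (head_tail_orth hrm hV) (head_tail_orth hrm hVt) (tail_head_orth hrn hUt)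
      B Bt hB1 hBt1
    rw [max_eq_left hc]
    apply sqrt_step hDnn he0 (by positivity) key
  · -- max = σt : swap roles
    have key := key_bound (headCols r hrn Ut) (headCols r hrn U)
      (headCols r hrm Vt) (headCols r hrm V)
      (tailColsX r hrn U) (tailColsX r hrm Vt) (tailColsX r hrm V)
      sgt sg σt σ (sgt ⟨0, by omega⟩) hσt hσ ((hsgtb ⟨r - 1, by omega⟩).2)
      hsgtb (fun i => (hsgb i).1)
      (headCols_orth hrn hUt) (headCols_orth hrm hVt) (headCols_orth hrn hU)
      (headCols_orth hrm hV)
      (tailCols_orth hrm hVt) (tailCols_orth hrm hV) (tailCols_orth hrn hU)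
      (full_split hrm hVt) (full_split hrm hV) (full_split hrn hU)
      (head_tail_orth hrm hVt) (head_tail_orth hrm hV) (tail_head_orth hrn hU)
      Bt B hBt1 hB1
    rw [show headCols r hrn Ut * (headCols r hrm Vt)ᵀ - headCols r hrn U * (headCols r hrm V)ᵀ
        = -(headCols r hrn U * (headCols r hrm V)ᵀ - headCols r hrn Ut * (headCols r hrm Vt)ᵀ)
        from (neg_sub _ _).symm, specNorm_neg] at key
    rw [show B - Bt = -(Bt - B) from (neg_sub _ _).symm, specNorm_neg] at key
    rw [max_eq_right hc]
    rw [show σ + σt = σt + σ from add_comm _ _]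
    apply sqrt_step hDnn he0 (by positivity) key
end
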